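/- arXiv:2511.03429 — 7 statements merged into one kernel-verified Lean document; each statement's English description precedes it below -/
import Mathlib

section
/- Let q = 1 + 2^{i_0} c with c odd and i_0 ≥ 2, let ξ be a primitive 2^i-th root of unity in an algebraic closure of F_q (with i ≥ 1 and gcd(2, q) = 1). Then the trace sum Σ_{j=0}^{o-1} ξ^{q^j}, where o = o_{2^i}(q) is the multiplicative order of q mod 2^i, equals 0 if and only if i > i_0. -/
lemma nat_odd_cast_zmod_two (n : ℕ) (h : Odd n) : ((n : ℕ) : ZMod 2) = 1 := by
  have : ((n % 2 : ℕ) : ZMod 2) = (n : ZMod 2) := ZMod.natCast_mod n 2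
  rw [← this, Nat.odd_iff.mp h]
  norm_num

lemma int_odd_of_cast_zmod_two (S : ℤ) (h : ((S : ℤ) : ZMod 2) = 1) : Odd S := by
  have hnd : ¬ ((2 : ℤ) ∣ S) := by
    intro hdv
    rw [(ZMod.intCast_zmod_eq_zero_iff_dvd S 2).mpr (by exact_mod_cast hdv)] at h
    exact zero_ne_one h
  rw [Int.odd_iff]
  omega

/-- If `k` is odd and `i0 < i`, then `q^k ≠ 1` in `ZMod (2^i)`. -/
lemma aux_pow_odd_ne_one (q i0 c i k : ℕ) (hc : Odd c) (hqe : q = 1 + 2 ^ i0 * c)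
    (hqodd : Odd q) (hii : i0 < i) (hk : Odd k) : ((q : ZMod (2 ^ i)) ^ k ≠ 1) := by
  intro h
  have hmod : q ^ k ≡ 1 [MOD 2 ^ i] := by
    have : ((q ^ k : ℕ) : ZMod (2 ^ i)) = ((1 : ℕ) : ZMod (2 ^ i)) := by push_cast; simpa using h
    exact (ZMod.natCast_eq_natCast_iff _ _ _).mp this
  have hdvd : ((2 : ℤ) ^ i) ∣ (q : ℤ) ^ k - 1 := by
    have := (hmod.symm).dvd
    push_cast at this ⊢
    exact this
  have hfac : (q : ℤ) ^ k - 1 = (∑ j ∈ Finset.range k, (q : ℤ) ^ j) * ((q : ℤ) - 1) :=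
    (geom_sum_mul (q : ℤ) k).symm
  set S : ℤ := ∑ j ∈ Finset.range k, (q : ℤ) ^ j with hS
  have hSodd : Odd S := by
    apply int_odd_of_cast_zmod_two
    have hq2 : ((q : ℕ) : ZMod 2) = 1 := nat_odd_cast_zmod_two q hqodd
    rw [hS]
    push_cast [hq2]
    simpa using nat_odd_cast_zmod_two k hk
  have hq1 : (q : ℤ) - 1 = 2 ^ i0 * c := by rw [hqe]; push_cast; ring
  rw [hfac, hq1] at hdvd
  have h2i : (2 : ℤ) ^ i = 2 ^ i0 * 2 ^ (i - i0) := by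
    rw [← pow_add]; congr 1; omega
  rw [h2i] at hdvd
  have hdvd2 : (2 : ℤ) ^ (i - i0) ∣ S * c := by
    refine (mul_dvd_mul_iff_left (a := (2 : ℤ) ^ i0) (by positivity)).mp ?_
    calc (2:ℤ) ^ i0 * 2 ^ (i - i0) ∣ S * (2 ^ i0 * c) := hdvd
      _ = 2 ^ i0 * (S * c) := by ring
  have h2dvd : (2 : ℤ) ∣ S * c := dvd_trans (dvd_pow_self 2 (by omega)) hdvd2
  have hScodd : Odd (S * c) := hSodd.mul ((Int.odd_coe_nat c).mpr hc)
  rw [Int.odd_iff] at hScodd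
  omega

/-- Key lemma: if `q^(2m) = 1` and `q^m ≠ 1` in `ZMod (2^i)` with `q ≡ 1 mod 4`,
then `q^m = 1 + 2^(i-1)` in `ZMod (2^i)`. -/
lemma aux_halfway (q i0 c i m : ℕ) (hc : Odd c) (hi0 : 2 ≤ i0)
    (hqe : q = 1 + 2 ^ i0 * c) (hii : i0 < i)
    (h1 : ((q : ZMod (2 ^ i))) ^ (2 * m) = 1) (h2 : ((q : ZMod (2 ^ i))) ^ m ≠ 1) :
    q ^ m ≡ 1 + 2 ^ (i - 1) [MOD 2 ^ i] := by
  have hi3 : 3 ≤ i := by omega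
  set A : ℤ := (q : ℤ) ^ m with hA
  -- 2^i ∣ A^2 - 1
  have hA2 : ((2 : ℤ) ^ i) ∣ A ^ 2 - 1 := by
    have hmod : q ^ (2 * m) ≡ 1 [MOD 2 ^ i] := by
      have : ((q ^ (2 * m) : ℕ) : ZMod (2 ^ i)) = ((1 : ℕ) : ZMod (2 ^ i)) := by
        push_cast; simpa using h1
      exact (ZMod.natCast_eq_natCast_iff _ _ _).mp this
    have := (hmod.symm).dvd
    push_cast at this
    convert this using 1
    rw [hA]; ring
  -- 4 ∣ A - 1
  have h4 : (4 : ℤ) ∣ A - 1 := by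
    have hq4 : (4 : ℤ) ∣ (q : ℤ) - 1 := by
      have h4d : (4 : ℤ) ∣ 2 ^ i0 * c := by
        refine dvd_mul_of_dvd_left ?_ (c : ℤ)
        calc (4:ℤ) = 2 ^ 2 := by norm_num
          _ ∣ 2 ^ i0 := pow_dvd_pow 2 hi0
      rw [hqe]; push_cast
      convert h4d using 1; ring
    calc (4 : ℤ) ∣ (q : ℤ) - 1 := hq4
      _ ∣ (q : ℤ) ^ m - 1 ^ m := sub_dvd_pow_sub_pow _ _ m
      _ = A - 1 := by rw [one_pow]
  obtain ⟨k, hk⟩ := h4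
  have hfac : A ^ 2 - 1 = 8 * (k * (2 * k + 1)) := by
    have : A = 4 * k + 1 := by omega
    rw [this]; ring
  rw [hfac] at hA2
  have h8 : (2 : ℤ) ^ i = 8 * 2 ^ (i - 3) := by
    have : (8 : ℤ) = 2 ^ 3 := by norm_num
    rw [this, ← pow_add]; congr 1; omega
  rw [h8] at hA2
  have hkd : (2 : ℤ) ^ (i - 3) ∣ k * (2 * k + 1) :=
    (mul_dvd_mul_iff_left (a := (8 : ℤ)) (by norm_num)).mp hA2
  have hcop : IsCoprime ((2 : ℤ) ^ (i - 3)) (2 * k + 1) := by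
    apply IsCoprime.pow_left
    exact ⟨-k, 1, by ring⟩
  have hkdvd : (2 : ℤ) ^ (i - 3) ∣ k := hcop.dvd_of_dvd_mul_right hkd
  obtain ⟨s, hs⟩ := hkdvd
  -- A - 1 = 2^(i-1) * s
  have hAs : A - 1 = 2 ^ (i - 1) * s := by
    rw [hk, hs]
    rw [show (2:ℤ) ^ (i-1) = 4 * 2 ^ (i - 3) by
      rw [show (4:ℤ) = 2^2 by norm_num, ← pow_add]; congr 1; omega]
    ring
  -- s is odd
  have hsodd : ¬ (2 : ℤ) ∣ s := by
    intro ⟨t, ht⟩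
    apply h2
    have : ((2 : ℤ) ^ i) ∣ A - 1 := by
      rw [hAs, ht, show (2:ℤ)^(i-1) * (2 * t) = 2^(i-1) * 2 * t by ring, ← pow_succ]
      rw [show i - 1 + 1 = i by omega]
      exact Dvd.intro t rfl
    have hmod : ((q ^ m : ℕ) : ZMod (2 ^ i)) = ((1 : ℕ) : ZMod (2 ^ i)) := by
      rw [ZMod.natCast_eq_natCast_iff]
      rw [Nat.modEq_iff_dvd]
      push_cast
      convert Int.dvd_neg.mpr this using 1
      rw [hA]; ring
    push_cast at hmod
    simpa using hmod
  obtain ⟨t, ht⟩ : ∃ t, s = 2 * t + 1 := by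
    rcases Int.even_or_odd s with he | ho
    · exact absurd he.two_dvd hsodd
    · exact ho
  -- A ≡ 1 + 2^(i-1) mod 2^i
  have hfin : ((2 : ℤ) ^ i) ∣ A - (1 + 2 ^ (i - 1)) := by
    rw [show A - (1 + 2^(i-1)) = (A - 1) - 2^(i-1) by ring, hAs, ht]
    rw [show (2:ℤ)^(i-1) * (2 * t + 1) - 2^(i-1) = 2^(i-1) * 2 * t by ring, ← pow_succ]
    rw [show i - 1 + 1 = i by omega]
    exact Dvd.intro t rfl
  rw [Nat.modEq_iff_dvd]
  push_cast
  convert Int.dvd_neg.mpr hfin using 1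
  rw [hA]; ring

/-- Let F be a finite field with q elements, q = 1 + 2^{i_0} c
with c odd and i_0 ≥ 2, let ξ be a primitive 2^i-th root of unity in the
algebraic closure of F, with i ≥ 1.  Then Σ_{j=0}^{o-1} ξ^{q^j} = 0, where
o = o_{2^i}(q), if and only if i > i_0. -/
theorem trace_sum_eq_zero_iff_of_q_eq_one_add
    (F : Type*) [Field F] [Fintype F]
    (q i0 c i : ℕ) (hq : q = Fintype.card F)
    (hc : Odd c) (hi0 : 2 ≤ i0) (hqe : q = 1 + 2 ^ i0 * c)
    (hi : 1 ≤ i)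
    (ξ : AlgebraicClosure F) (hξ : IsPrimitiveRoot ξ (2 ^ i)) :
    (∑ j ∈ Finset.range (orderOf (q : ZMod (2 ^ i))), ξ ^ (q ^ j)) = 0 ↔
      i0 < i := by
  have hqodd : Odd q := by
    refine ⟨2 ^ (i0 - 1) * c, ?_⟩
    rw [hqe, show (2:ℕ) ^ i0 = 2 * 2 ^ (i0 - 1) by
      rw [← pow_succ']; congr 1; omega]
    ring
  rcases le_or_gt i i0 with hle | hlt
  · -- i ≤ i0 : order is 1, sum is ξ ≠ 0
    have hq1 : ((q : ℕ) : ZMod (2 ^ i)) = 1 := by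
      have hdvd : (2 ^ i : ℕ) ∣ 2 ^ i0 * c := Dvd.dvd.mul_right (pow_dvd_pow 2 hle) c
      calc ((q : ℕ) : ZMod (2 ^ i)) = ((1 + 2 ^ i0 * c : ℕ) : ZMod (2 ^ i)) := by rw [hqe]
        _ = 1 := by
            rw [Nat.cast_add, Nat.cast_one,
              (ZMod.natCast_eq_zero_iff _ _).mpr hdvd, add_zero]
    rw [hq1, orderOf_one, Finset.sum_range_one, pow_zero, pow_one]
    exact iff_of_false (hξ.ne_zero (by positivity)) (by omega)
  · -- i0 < i
    have hi3 : 3 ≤ i := by omega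
    set o : ℕ := orderOf ((q : ℕ) : ZMod (2 ^ i)) with ho
    haveI : NeZero (2 ^ i) := ⟨by positivity⟩
    have hopos : 0 < o := by
      have hunit : IsUnit ((q : ℕ) : ZMod (2 ^ i)) := by
        rw [ZMod.isUnit_iff_coprime]
        exact Nat.Coprime.pow_right i (hqodd.coprime_two_right)
      rw [ho, ← hunit.unit_spec, orderOf_units]
      exact orderOf_pos _
    have hoeven : Even o := by
      by_contra hodd
      rw [Nat.not_even_iff_odd] at hodd
      exact aux_pow_odd_ne_one q i0 c i o hc hqe hqodd hlt hodd (pow_orderOf_eq_one _)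
    obtain ⟨m, hm⟩ : ∃ m, o = 2 * m := hoeven.exists_two_nsmul o
    have hmpos : 0 < m := by omega
    have h1 : ((q : ℕ) : ZMod (2 ^ i)) ^ (2 * m) = 1 := by
      rw [← hm]; exact pow_orderOf_eq_one _
    have h2 : ((q : ℕ) : ZMod (2 ^ i)) ^ m ≠ 1 := by
      intro h
      have := orderOf_dvd_of_pow_eq_one h
      rw [← ho] at this
      have := Nat.le_of_dvd hmpos this
      omega
    have hmod : q ^ m ≡ 1 + 2 ^ (i - 1) [MOD 2 ^ i] :=
      aux_halfway q i0 c i m hc hi0 hqe hlt h1 h2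
    -- ξ^(2^i) = 1 and reduction of exponents mod 2^i
    have h2i : ξ ^ (2 ^ i : ℕ) = 1 := hξ.pow_eq_one
    have hred : ∀ a : ℕ, ξ ^ a = ξ ^ (a % 2 ^ i) := by
      intro a
      conv_lhs => rw [← Nat.div_add_mod a (2 ^ i)]
      rw [pow_add, pow_mul, h2i, one_pow, one_mul]
    have hneg : ξ ^ (2 ^ (i - 1)) = -1 := by
      have := (hξ.pow (n := 2 ^ i) (by positivity)
        (show 2 ^ i = 2 ^ (i - 1) * 2 by rw [← pow_succ]; congr 1; omega))
      exact this.eq_neg_one_of_two_right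
    have hxm : ξ ^ (q ^ m) = -ξ := by
      have hlt2 : 1 + 2 ^ (i - 1) < 2 ^ i := by
        calc 1 + 2 ^ (i-1) < 2 ^ (i-1) + 2 ^ (i-1) :=
              Nat.add_lt_add_right (Nat.one_lt_two_pow_iff.mpr (by omega)) _
          _ = 2 ^ i := by rw [← two_mul, ← pow_succ']; congr 1; omega
      rw [hred (q ^ m), hmod, Nat.mod_eq_of_lt hlt2]
      rw [pow_add, pow_one, hneg, mul_neg_one]
    have hpair : ∀ j : ℕ, ξ ^ (q ^ (m + j)) = -(ξ ^ (q ^ j)) := by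
      intro j
      rw [pow_add, mul_comm, pow_mul, ← pow_mul, mul_comm, pow_mul, hxm]
      exact Odd.neg_pow (hqodd.pow) _
    have hsum : (∑ j ∈ Finset.range o, ξ ^ (q ^ j)) = 0 := by
      rw [hm, two_mul, Finset.sum_range_add]
      rw [Finset.sum_congr rfl (fun j _ => hpair j)]
      rw [Finset.sum_neg_distrib]
      ring
    exact iff_of_true hsum hlt
end

section
/- Let n ≥ 3 and q odd. Then the equivalence '-1 ∈ ⟨q⟩ mod 2^n if and only if -1 + 2^{n-1} ∈ ⟨q⟩ mod 2^n' holds if and only if q ≢ -1 mod 2^{n-1}. -/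
/-!
For odd `q` and a target `c ≡ -1 (mod 2^m)` with `m ≥ 2`, some power of `q` is `≡ c (mod 2^(m+1))`
only if `q` itself is: even powers of `q` are `≡ 1 (mod 4)` while `c ≡ -1 (mod 4)`, and for odd `j`
we have `q^j + 1 = (q + 1) S` with `S` odd, so `q^j - c ≡ (q - c) S (mod 2^(m+1))`.
Both `-1` and `-1 + 2^(n-1)` are such targets modulo `2^n`, so each lies in `⟨q⟩` exactly when it
equals `q`. These two cases are exclusive and together say `q ≡ -1 (mod 2^(n-1))`; hence the two
memberships are equivalent precisely when both fail.
-/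

namespace Int

theorem exists_odd_mul_eq_pow_add_one {q : ℤ} (hq : Odd q) (k : ℕ) :
    ∃ S : ℤ, Odd S ∧ q ^ (2 * k + 1) + 1 = (q + 1) * S := by
  induction k with
  | zero => exact ⟨1, odd_one, by ring⟩
  | succ k ih =>
    obtain ⟨S, hS, hqS⟩ := ih
    refine ⟨q ^ 2 * S - (q - 1), (hq.pow.mul hS).sub_even (hq.sub_odd odd_one), ?_⟩
    linear_combination q ^ 2 * hqS

theorem pow_odd_modEq_iff {m : ℕ} {q c : ℤ} {j : ℕ} (hq : Odd q) (hj : Odd j)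
    (hc : c ≡ -1 [ZMOD 2 ^ m]) :
    q ^ j ≡ c [ZMOD 2 ^ (m + 1)] ↔ q ≡ c [ZMOD 2 ^ (m + 1)] := by
  obtain ⟨k, rfl⟩ := hj
  obtain ⟨S, ⟨s, rfl⟩, hqS⟩ := exists_odd_mul_eq_pow_add_one hq k
  obtain ⟨t, ht⟩ := Int.modEq_iff_dvd.1 hc.symm
  have hS : IsCoprime ((2 : ℤ) ^ (m + 1)) (2 * s + 1) :=
    (Int.isCoprime_two_left.2 ⟨s, rfl⟩).pow_left
  -- `c + 1 = 2^m t` absorbs the even factor `S - 1 = 2 s`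
  have hsplit : c - q ^ (2 * k + 1) = (c - q) * (2 * s + 1) + 2 ^ (m + 1) * (-(t * s)) := by
    linear_combination (-1 : ℤ) * hqS - (2 * s) * ht
  rw [Int.modEq_iff_dvd, Int.modEq_iff_dvd, hsplit, dvd_add_left (dvd_mul_right _ _)]
  exact ⟨hS.dvd_of_dvd_mul_right, fun h => h.mul_right _⟩

theorem not_pow_even_modEq_of_modEq_neg_one {m : ℕ} {q c : ℤ} {j : ℕ} (hm : 2 ≤ m)
    (hq : Odd q) (hj : Even j) (hc : c ≡ -1 [ZMOD 2 ^ m]) :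
    ¬ q ^ j ≡ c [ZMOD 2 ^ (m + 1)] := by
  intro hqc
  obtain ⟨k, rfl⟩ := hj
  have h4 : ∀ {l : ℕ}, 2 ≤ l → (4 : ℤ) ∣ 2 ^ l := fun hl => by
    simpa using pow_dvd_pow (2 : ℤ) hl
  have hsq : (q ^ k) ^ 2 ≡ 1 [ZMOD 4] := Int.sq_mod_four_eq_one_of_odd hq.pow
  have hsq' : (q ^ k) ^ 2 ≡ -1 [ZMOD 4] := by
    rw [← pow_mul, mul_two]
    exact (hqc.of_dvd (h4 (by omega))).trans (hc.of_dvd (h4 hm))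
  exact absurd (hsq.symm.trans hsq') (by decide)

theorem exists_pow_modEq_iff_modEq {m : ℕ} {q c : ℤ} (hm : 2 ≤ m) (hq : Odd q)
    (hc : c ≡ -1 [ZMOD 2 ^ m]) :
    (∃ j : ℕ, q ^ j ≡ c [ZMOD 2 ^ (m + 1)]) ↔ q ≡ c [ZMOD 2 ^ (m + 1)] := by
  refine ⟨fun ⟨j, hj⟩ => ?_, fun h => ⟨1, by rwa [pow_one]⟩⟩
  rcases j.even_or_odd with hje | hjo
  · exact absurd hj (not_pow_even_modEq_of_modEq_neg_one hm hq hje hc)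
  · exact (pow_odd_modEq_iff hq hjo hc).1 hj

theorem modEq_iff_modEq_two_mul_or {a b m : ℤ} :
    a ≡ b [ZMOD m] ↔ a ≡ b [ZMOD 2 * m] ∨ a ≡ b + m [ZMOD 2 * m] := by
  simp only [Int.modEq_iff_dvd]
  constructor
  · rintro ⟨t, ht⟩
    obtain ⟨s, rfl | rfl⟩ := t.even_or_odd'
    · exact Or.inl ⟨s, by rw [ht]; ring⟩
    · exact Or.inr ⟨s + 1, by linear_combination ht⟩
  · rintro (h | ⟨u, hu⟩)
    · exact (dvd_mul_left m 2).trans h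
    · exact ⟨2 * u - 1, by linear_combination hu⟩

theorem not_modEq_two_mul_and_modEq_add {a b m : ℤ} (hm : m ≠ 0) :
    ¬ (a ≡ b [ZMOD 2 * m] ∧ a ≡ b + m [ZMOD 2 * m]) := by
  rintro ⟨h, h'⟩
  obtain ⟨k, hk⟩ := Int.modEq_iff_dvd.1 (h.symm.trans h')
  have h1 : m * 1 = m * (2 * k) := by linear_combination hk
  have := mul_left_cancel₀ hm h1
  omega

end Int

/-- For n ≥ 3 and odd q, the equivalence
"-1 ∈ ⟨q⟩ mod 2^n ↔ -1 + 2^{n-1} ∈ ⟨q⟩ mod 2^n" holds if and only if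
q ≢ -1 mod 2^{n-1}. -/
theorem neg_one_in_powers_iff_iff_not_cong
    (n : ℕ) (q : ℤ) (hn : 3 ≤ n) (hq : Odd q) :
    (((∃ j : ℕ, (q : ZMod (2 ^ n)) ^ j = -1) ↔
        (∃ j : ℕ, (q : ZMod (2 ^ n)) ^ j = -1 + 2 ^ (n - 1)))) ↔
      ¬ q ≡ -1 [ZMOD (2 ^ (n - 1))] := by
  obtain ⟨m, rfl⟩ : ∃ m, n = m + 1 := ⟨n - 1, by omega⟩
  have hcast : ∀ c : ℤ, (∃ j : ℕ, (q : ZMod (2 ^ (m + 1))) ^ j = c) ↔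
      ∃ j : ℕ, q ^ j ≡ c [ZMOD 2 ^ (m + 1)] := fun c => by
    simp only [← Int.cast_pow, ZMod.intCast_eq_intCast_iff, Nat.cast_pow, Nat.cast_ofNat]
  have hneg_one := Int.exists_pow_modEq_iff_modEq (by omega) hq
    (Int.ModEq.refl (-1 : ℤ) (n := 2 ^ m))
  have hshifted := Int.exists_pow_modEq_iff_modEq (by omega) hq
    (show -1 + 2 ^ m ≡ -1 [ZMOD 2 ^ m] from Int.add_modEq_right)
  have hsplit := Int.modEq_iff_modEq_two_mul_or (a := q) (b := -1) (m := 2 ^ m)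
  have hexcl := Int.not_modEq_two_mul_and_modEq_add (a := q) (b := -1) (pow_ne_zero m two_ne_zero)
  rw [← pow_succ'] at hsplit hexcl
  have hneg_one_cast : (-1 : ZMod (2 ^ (m + 1))) = ((-1 : ℤ) : ZMod (2 ^ (m + 1))) := by
    push_cast; rfl
  have hshifted_cast : (-1 + 2 ^ m : ZMod (2 ^ (m + 1))) = ((-1 + 2 ^ m : ℤ) : ZMod (2 ^ (m + 1))) := by
    push_cast; rfl
  rw [Nat.add_sub_cancel, hshifted_cast, hneg_one_cast, hcast, hcast, hneg_one, hshifted, hsplit]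
  tauto
end

section
/- Let G be a finite group, K ⊴ G with G/K cyclic of order k, and let e be a primitive central idempotent of the semisimple group algebra F_qG with e = e·K̂ (where K̂ = (1/|K|)Σ_{x∈K} x) and dim_{F_q}(F_qGe) = o_k(q) < k. Then every nonzero element of the ideal F_qG·e has Hamming weight at least 2|K|. -/
/-!
Since `e K̂ = e`, every `α ∈ FG·e` satisfies `α K̂ = α`, so `α` is constant on the left cosets of
`K` and its support is a union of such cosets. If the support were a single coset `gK`, then
`g⁻¹ α` would be a nonzero multiple of `Σ_{x ∈ K} x`; the ideal would then contain this element
and its `|G/K| = k` linearly independent left translates, contradicting `dim FG·e = o_k(q) < k`.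
-/

open MonoidAlgebra

lemma Finset.two_mul_card_subgroup_le_card {G : Type*} [Group G] {K : Subgroup G} [Fintype K]
    {s : Finset G} (hs : ∀ g ∈ s, ∀ x ∈ K, g * x ∈ s) {g h : G} (hg : g ∈ s) (hh : h ∈ s)
    (hgh : g⁻¹ * h ∉ K) : 2 * Nat.card K ≤ s.card := by
  classical
  let coset (a : G) : Finset G :=
    univ.map ⟨fun x : K => a * x, fun x y hxy => Subtype.ext (mul_left_cancel hxy)⟩
  have hcoset_card (a : G) : (coset a).card = Nat.card K := by
    simp [coset, Nat.card_eq_fintype_card]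
  have hcoset_sub {a : G} (ha : a ∈ s) : coset a ⊆ s := by
    intro _ hb
    obtain ⟨x, -, rfl⟩ := mem_map.mp hb
    exact hs a ha x x.2
  have hdisj : Disjoint (coset g) (coset h) := by
    simp only [coset, disjoint_left, mem_map]
    rintro _ ⟨x, -, rfl⟩ ⟨y, -, hyx⟩
    apply hgh
    replace hyx : h * y = g * x := hyx
    have : g⁻¹ * h = x * (y : G)⁻¹ := by
      rw [eq_mul_inv_iff_mul_eq, mul_assoc, hyx, inv_mul_cancel_left]
    simpa [this] using K.mul_mem x.2 (K.inv_mem y.2)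
  calc 2 * Nat.card K = (coset g ∪ coset h).card := by
        rw [card_union_of_disjoint hdisj, hcoset_card, hcoset_card, two_mul]
    _ ≤ s.card := card_le_card (union_subset (hcoset_sub hg) (hcoset_sub hh))

namespace MonoidAlgebra

variable (R : Type*) [Semiring R] {G : Type*} [Group G]

/-- The element `|K| K̂` of `R[G]`. -/
noncomputable def subgroupSum (K : Subgroup G) [Fintype K] : R[G] :=
  ∑ x : K, of R G x

variable {R} {K : Subgroup G} [Fintype K]

lemma coeff_subgroupSum [DecidablePred (· ∈ K)] (g : G) :
    (subgroupSum R K).coeff g = if g ∈ K then 1 else 0 := by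
  classical
  simp only [subgroupSum, coeff_sum, of_apply, coeff_single, Finset.sum_apply',
    Finsupp.single_apply]
  split_ifs with hg
  · rw [Fintype.sum_eq_single ⟨g, hg⟩ fun x hx => if_neg (mt Subtype.ext hx), if_pos rfl]
  · exact Finset.sum_eq_zero fun x _ => if_neg fun (hx : (x : G) = g) => hg (hx ▸ x.2)

lemma subgroupSum_mul_of_mem {x : G} (hx : x ∈ K) :
    subgroupSum R K * of R G x = subgroupSum R K := by
  simp only [subgroupSum, Finset.sum_mul, ← map_mul]
  exact Fintype.sum_equiv (Equiv.mulRight ⟨x, hx⟩) _ _ fun _ => rfl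

lemma coeff_mul_eq_of_mul_smul_subgroupSum {α : R[G]} {c : R}
    (hα : α * (c • subgroupSum R K) = α) {x : G} (hx : x ∈ K) (g : G) :
    α.coeff (g * x) = α.coeff g := by
  have hαx : α * of R G x = α := by
    rw [← hα, mul_assoc, smul_mul_assoc, subgroupSum_mul_of_mem hx]
  simpa [of_apply] using congr(($hαx.symm).coeff (g * x))

lemma single_inv_mul_eq_smul_subgroupSum {α : R[G]}
    (hα : ∀ g, ∀ x ∈ K, α.coeff (g * x) = α.coeff g) {g : G}
    (hsupp : ∀ h ∈ α.coeff.support, g⁻¹ * h ∈ K) :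
    single g⁻¹ 1 * α = α.coeff g • subgroupSum R K := by
  classical
  ext t
  rw [coeff_single_mul_apply, one_mul, inv_inv, coeff_smul_apply, coeff_subgroupSum, smul_eq_mul]
  by_cases ht : t ∈ K
  · rw [if_pos ht, mul_one, hα g t ht]
  · rw [if_neg ht, mul_zero]
    by_contra hne
    simpa [ht] using hsupp _ (Finsupp.mem_support_iff.mpr hne)

lemma natCard_quotient_le_finrank_of_subgroupSum_mem {F : Type*} [Field F] {G : Type*} [Group G]
    [Fintype G] {K : Subgroup G} [Fintype K] {I : Ideal F[G]} (hS : subgroupSum F K ∈ I) :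
    Nat.card (G ⧸ K) ≤ Module.finrank F I := by
  classical
  let v (q : G ⧸ K) : F[G] := of F G q.out * subgroupSum F K
  let φ : F[G] →ₗ[F] G ⧸ K → F :=
    LinearMap.funLeft F F Quotient.out ∘ₗ Finsupp.lcoeFun ∘ₗ (coeffLinearEquiv F).toLinearMap
  have hφv : φ ∘ v = Pi.basisFun F (G ⧸ K) := by
    ext q q'
    simp [φ, v, of_apply, coeff_subgroupSum, Pi.single_apply, ← QuotientGroup.eq, eq_comm]
  have hv : LinearIndependent F v := .of_comp φ (hφv ▸ (Pi.basisFun F _).linearIndependent)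
  calc Nat.card (G ⧸ K) = Module.finrank F (Submodule.span F (Set.range v)) := by
        rw [finrank_span_eq_card hv, Nat.card_eq_fintype_card]
    _ ≤ Module.finrank F (I.restrictScalars F) :=
        Submodule.finrank_mono <| Submodule.span_le.mpr <|
          Set.range_subset_iff.mpr fun _ => I.mul_mem_left _ hS
    _ = Module.finrank F I := rfl

end MonoidAlgebra

theorem weight_ge_two_card_K_general
    (F : Type*) [Field F] [Fintype F] (G : Type*) [Group G] [Fintype G]
    (K : Subgroup G) [DecidablePred (· ∈ K)]
    (k : ℕ) (hk : k = Nat.card (G ⧸ K))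
    (e : MonoidAlgebra F G)
    (hKhat : e * ((Nat.card K : F)⁻¹ •
        ∑ x : K, MonoidAlgebra.of F G (x : G)) = e)
    (hdim : Module.finrank F (Ideal.span {e} : Ideal (MonoidAlgebra F G)) =
      orderOf ((Fintype.card F : ZMod k)))
    (hlt : orderOf ((Fintype.card F : ZMod k)) < k) :
    ∀ α ∈ (Ideal.span {e} : Ideal (MonoidAlgebra F G)), α ≠ 0 →
      2 * Nat.card K ≤ α.coeff.support.card := by
  intro α hα hα0
  obtain ⟨r, hr⟩ := Ideal.mem_span_singleton'.mp hα
  have hinv : ∀ g, ∀ x ∈ K, α.coeff (g * x) = α.coeff g := fun g x hx =>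
    coeff_mul_eq_of_mul_smul_subgroupSum (by rw [← hr, mul_assoc, subgroupSum, hKhat]) hx g
  obtain ⟨g, hg⟩ := Finsupp.support_nonempty_iff.mpr (coeff_eq_zero.not.mpr hα0)
  by_cases hcoset : ∃ h ∈ α.coeff.support, g⁻¹ * h ∉ K
  · obtain ⟨h, hh, hgh⟩ := hcoset
    refine Finset.two_mul_card_subgroup_le_card (fun a ha x hx => ?_) hg hh hgh
    rwa [Finsupp.mem_support_iff, hinv a x hx, ← Finsupp.mem_support_iff]
  · push Not at hcoset
    have hS : subgroupSum F K ∈ Ideal.span {e} := by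
      have := (Ideal.span {e}).mul_mem_left ((α.coeff g)⁻¹ • single g⁻¹ 1) hα
      rwa [smul_mul_assoc, single_inv_mul_eq_smul_subgroupSum hinv hcoset, smul_smul,
        inv_mul_cancel₀ (Finsupp.mem_support_iff.mp hg), one_smul] at this
    have := natCard_quotient_le_finrank_of_subgroupSum_mem hS
    omega

/-- Let G be finite, F a finite field with q elements coprime to
|G|, K ⊴ G with G/K cyclic of order k, e a primitive central idempotent with
e·K̂ = e and dim_F(FG·e) = o_k(q) < k.  Then every nonzero element of the ideal
FG·e has Hamming weight (support size) at least 2|K|. -/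
theorem weight_ge_two_card_K
    (F : Type*) [Field F] [Fintype F] (G : Type*) [Group G] [Fintype G] [DecidableEq G]
    (hcop : Nat.Coprime (Fintype.card F) (Nat.card G))
    (K : Subgroup G) [K.Normal] [DecidablePred (· ∈ K)] [IsCyclic (G ⧸ K)]
    (k : ℕ) (hk : k = Nat.card (G ⧸ K))
    (e : MonoidAlgebra F G)
    (hcentral : e ∈ Subring.center (MonoidAlgebra F G))
    (hidem : e * e = e) (hne : e ≠ 0)
    (hprim : ∀ f₁ f₂ : MonoidAlgebra F G,
      f₁ ∈ Subring.center (MonoidAlgebra F G) →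
      f₂ ∈ Subring.center (MonoidAlgebra F G) →
      f₁ * f₁ = f₁ → f₂ * f₂ = f₂ → f₁ * f₂ = 0 → e = f₁ + f₂ →
      f₁ = 0 ∨ f₂ = 0)
    (hKhat : e * ((Nat.card K : F)⁻¹ •
        ∑ x : K, MonoidAlgebra.of F G (x : G)) = e)
    (hdim : Module.finrank F (Ideal.span {e} : Ideal (MonoidAlgebra F G)) =
      orderOf ((Fintype.card F : ZMod k)))
    (hlt : orderOf ((Fintype.card F : ZMod k)) < k) :
    ∀ α ∈ (Ideal.span {e} : Ideal (MonoidAlgebra F G)), α ≠ 0 →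
      2 * Nat.card K ≤ α.coeff.support.card :=
  weight_ge_two_card_K_general F G K k hk e hKhat hdim hlt
end

section
/- Under the hypotheses of the two-prime vanishing theorem with i_0^{(1)} < j_1 ≤ m and i_0^{(2)} < j_2 ≤ ℓ, the multiplicative order of q modulo p_1^{j_1} p_2^{j_2} equals p_1^{j_1 - i_0^{(1)}} · p_2^{j_2 - i_0^{(2)}} · lcm((p_1-1)/δ_1', (p_2-1)/δ_2'). -/
/-!
Let `d` be the order of `q` modulo `p` and `p ^ i₀ ∥ q ^ d - 1`. By lifting the exponent,
`p ^ (i₀ + k) ∥ q ^ (d * p ^ k) - 1`, so the order of `q` modulo `p ^ j` is `d * p ^ (j - i₀)`.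
Comparing `p`-parts and prime-to-`p` parts in `o_{p^m}(q) * p ^ (i - 1) * δ' = p ^ (m - 1) * (p - 1)`
identifies `i₀ = i` and `d = (p - 1) / δ'`. By the Chinese remainder theorem the order modulo
`p₁ ^ j₁ * p₂ ^ j₂` is the lcm of the two orders, and `p₁ < p₂`, `p₁ ∤ p₂ - 1` make the prime
powers split off the lcm.
-/

lemma ZMod.natCast_pow_eq_one_iff_dvd {n q k : ℕ} (hq : 0 < q) :
    (q : ZMod n) ^ k = 1 ↔ n ∣ q ^ k - 1 := by
  rw [← Nat.cast_pow, ← Nat.cast_one, ZMod.natCast_eq_natCast_iff, Nat.ModEq.comm,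
    Nat.modEq_iff_dvd' (Nat.one_le_pow _ _ hq)]

lemma ZMod.orderOf_natCast_mul_of_coprime {m n : ℕ} (h : m.Coprime n) (q : ℕ) :
    orderOf (q : ZMod (m * n)) = Nat.lcm (orderOf (q : ZMod m)) (orderOf (q : ZMod n)) := by
  rw [← (ZMod.chineseRemainder h).toMulEquiv.orderOf_eq, Prod.orderOf]
  simp

lemma Nat.pow_mul_eq_pow_mul_of_not_dvd {p a b u v : ℕ} (hp : p.Prime) (hu : ¬ p ∣ u)
    (hv : ¬ p ∣ v) (h : p ^ a * u = p ^ b * v) : a = b ∧ u = v := by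
  have : Fact p.Prime := ⟨hp⟩
  have hu0 : u ≠ 0 := by rintro rfl; exact hu (dvd_zero p)
  have hv0 : v ≠ 0 := by rintro rfl; exact hv (dvd_zero p)
  have hab : a = b := by
    simpa [padicValNat.mul, hu0, hv0, hp.ne_zero, padicValNat.eq_zero_of_not_dvd hu,
      padicValNat.eq_zero_of_not_dvd hv] using congrArg (padicValNat p) h
  subst hab
  exact ⟨rfl, Nat.eq_of_mul_eq_mul_left (pow_pos hp.pos a) h⟩

lemma Nat.lcm_mul_mul_eq_mul_mul_lcm {x y a b : ℕ} (hx : x.Coprime (y * b)) (hy : y.Coprime a) :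
    Nat.lcm (x * a) (y * b) = x * y * Nat.lcm a b := by
  have hgcd : Nat.gcd (x * a) (y * b) = Nat.gcd a b := by
    rw [Nat.Coprime.gcd_mul_left_cancel a hx, Nat.Coprime.gcd_mul_left_cancel_right b hy]
  rw [Nat.lcm, Nat.lcm, hgcd, ← Nat.mul_div_assoc _ ((Nat.gcd_dvd_left a b).mul_right b)]
  ring_nf

section PrimePowerOrder

variable {p : ℕ} [hp : Fact p.Prime]

lemma padicValNat_pow_prime_pow_sub_one (hpodd : Odd p) {x : ℕ} (hx : 1 < x) (hpx : p ∣ x - 1)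
    (s : ℕ) : padicValNat p (x ^ p ^ s - 1) = padicValNat p (x - 1) + s := by
  have hpx' : ¬ p ∣ x := fun h =>
    hp.out.one_lt.ne' (Nat.dvd_one.mp (by simpa [Nat.sub_sub_self hx.le] using Nat.dvd_sub h hpx))
  simpa [padicValNat.prime_pow] using
    padicValNat.pow_sub_pow hpodd hx (by simpa using hpx) hpx' (pow_ne_zero s hp.out.ne_zero)

/-- The paper's `i₀`: `p ^ i₀ ∥ q ^ d - 1`, where `d` is the order of `q` modulo `p`. -/
noncomputable def liftingExponent (p q : ℕ) : ℕ := padicValNat p (q ^ orderOf (q : ZMod p) - 1)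

-- For `j ≤ i₀` the truncated subtraction gives the correct order `d`.
theorem orderOf_natCast_zmod_prime_pow (hpodd : Odd p) {q : ℕ} (hq : 1 < q) (hpq : ¬ p ∣ q)
    {j : ℕ} (hj : j ≠ 0) :
    orderOf (q : ZMod (p ^ j)) = orderOf (q : ZMod p) * p ^ (j - liftingExponent p q) := by
  set d := orderOf (q : ZMod p)
  set i := liftingExponent p q
  have hd : 0 < d := Nat.pos_of_dvd_of_pos
    (ZMod.orderOf_dvd_card_sub_one (by rwa [Ne, ZMod.natCast_eq_zero_iff]))
    (Nat.sub_pos_of_lt hp.out.one_lt)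
  have hpd : p ∣ q ^ d - 1 :=
    (ZMod.natCast_pow_eq_one_iff_dvd (by omega)).mp (pow_orderOf_eq_one _)
  have hqd : 1 < q ^ d := Nat.one_lt_pow hd.ne' hq
  have hpow_eq_one_iff (k : ℕ) : (q : ZMod (p ^ j)) ^ (d * p ^ k) = 1 ↔ j ≤ i + k := by
    have hpos : 1 < (q ^ d) ^ p ^ k := Nat.one_lt_pow (pow_ne_zero k hp.out.ne_zero) hqd
    rw [ZMod.natCast_pow_eq_one_iff_dvd (by omega), pow_mul,
      padicValNat_dvd_iff_le (by omega), padicValNat_pow_prime_pow_sub_one hpodd hqd hpd k]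
    rfl
  have hdvd : orderOf (q : ZMod (p ^ j)) ∣ d * p ^ (j - i) :=
    orderOf_dvd_of_pow_eq_one ((hpow_eq_one_iff _).mpr (by omega))
  have hd_dvd : d ∣ orderOf (q : ZMod (p ^ j)) := by
    simpa using orderOf_map_dvd (ZMod.castHom (dvd_pow_self p hj) (ZMod p)).toMonoidHom
      (q : ZMod (p ^ j))
  obtain ⟨u, hu⟩ := hd_dvd
  obtain ⟨e, he, rfl⟩ := (Nat.dvd_prime_pow hp.out).mp
    (Nat.dvd_of_mul_dvd_mul_left hd (hu ▸ hdvd))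
  have hje : j ≤ i + e := (hpow_eq_one_iff e).mp (hu ▸ pow_orderOf_eq_one _)
  rw [hu, show e = j - i by omega]

theorem orderOf_natCast_zmod_prime_pow_of_mul_eq_totient (hpodd : Odd p) {q m i δ j : ℕ}
    (hpq : ¬ p ∣ q) (hδ : δ.Coprime p) (hi : 1 ≤ i) (hij : i < j) (hjm : j ≤ m)
    (ho : orderOf (q : ZMod (p ^ m)) * (p ^ (i - 1) * δ) = (p ^ m).totient) :
    δ ∣ p - 1 ∧ orderOf (q : ZMod (p ^ j)) = p ^ (j - i) * ((p - 1) / δ) := by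
  have hp_sub_one : ¬ p ∣ p - 1 := fun h =>
    absurd (Nat.le_of_dvd (Nat.sub_pos_of_lt hp.out.one_lt) h)
      (Nat.not_le.mpr (Nat.sub_lt hp.out.pos one_pos))
  have hpδ : ¬ p ∣ δ := (Nat.Prime.coprime_iff_not_dvd hp.out).mp hδ.symm
  rw [Nat.totient_prime_pow hp.out (n := m) (by omega)] at ho
  have hq : 1 < q := by
    by_contra! hq
    obtain rfl : q = 1 := by
      interval_cases q
      · exact absurd (dvd_zero p) hpq
      · rfl
    rw [Nat.cast_one, orderOf_one, one_mul] at ho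
    have := (Nat.pow_mul_eq_pow_mul_of_not_dvd hp.out hpδ hp_sub_one ho).1
    omega
  set d := orderOf (q : ZMod p)
  have hpd : ¬ p ∣ d := fun h => hp_sub_one (h.trans
    (ZMod.orderOf_dvd_card_sub_one (by rwa [Ne, ZMod.natCast_eq_zero_iff])))
  rw [orderOf_natCast_zmod_prime_pow hpodd hq hpq (j := m) (by omega)] at ho
  obtain ⟨hexp, hdδ⟩ := Nat.pow_mul_eq_pow_mul_of_not_dvd
    (a := m - liftingExponent p q + (i - 1)) hp.out (Nat.Prime.not_dvd_mul hp.out hpd hpδ)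
    hp_sub_one (by rw [← ho]; ring)
  have hδ0 : 0 < δ := Nat.pos_of_ne_zero fun h => hp_sub_one (by simp [← hdδ, h])
  refine ⟨Dvd.intro_left _ hdδ, ?_⟩
  rw [orderOf_natCast_zmod_prime_pow hpodd hq hpq (by omega), mul_comm,
    Nat.div_eq_of_eq_mul_left hδ0 hdδ.symm, show liftingExponent p q = i by omega]

end PrimePowerOrder

theorem two_prime_order_formula_general
    (p₁ p₂ q m ℓ δ₁ δ₂ i01 i02 δ₁' δ₂' j₁ j₂ : ℕ)
    (hp₁ : p₁.Prime) (hp₂ : p₂.Prime) (hp₁odd : Odd p₁) (hp₂odd : Odd p₂)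
    (hlt : p₁ < p₂) (hndvd : ¬ p₁ ∣ (p₂ - 1))
    (hcop : Nat.Coprime q (p₁ * p₂))
    (ho₁ : orderOf ((q : ZMod (p₁ ^ m))) * δ₁ = Nat.totient (p₁ ^ m))
    (ho₂ : orderOf ((q : ZMod (p₂ ^ ℓ))) * δ₂ = Nat.totient (p₂ ^ ℓ))
    (hi01 : 1 ≤ i01) (hi02 : 1 ≤ i02)
    (hδ₁ : δ₁ = p₁ ^ (i01 - 1) * δ₁') (hδ₂ : δ₂ = p₂ ^ (i02 - 1) * δ₂')
    (hδ₁' : Nat.Coprime δ₁' p₁) (hδ₂' : Nat.Coprime δ₂' p₂)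
    (hj₁ : i01 < j₁) (hj₁m : j₁ ≤ m) (hj₂ : i02 < j₂) (hj₂ℓ : j₂ ≤ ℓ) :
    orderOf ((q : ZMod (p₁ ^ j₁ * p₂ ^ j₂))) =
      p₁ ^ (j₁ - i01) * p₂ ^ (j₂ - i02) *
        Nat.lcm ((p₁ - 1) / δ₁') ((p₂ - 1) / δ₂') := by
  have : Fact p₁.Prime := ⟨hp₁⟩
  have : Fact p₂.Prime := ⟨hp₂⟩
  subst hδ₁ hδ₂
  have hp₁₂ : p₁.Coprime p₂ := (Nat.coprime_primes hp₁ hp₂).mpr hlt.ne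
  obtain ⟨hδ₁dvd, hord₁⟩ := orderOf_natCast_zmod_prime_pow_of_mul_eq_totient hp₁odd
    (hp₁.coprime_iff_not_dvd.mp hcop.coprime_mul_right_right.symm)
    hδ₁' hi01 hj₁ hj₁m ho₁
  obtain ⟨hδ₂dvd, hord₂⟩ := orderOf_natCast_zmod_prime_pow_of_mul_eq_totient hp₂odd
    (hp₂.coprime_iff_not_dvd.mp hcop.coprime_mul_left_right.symm)
    hδ₂' hi02 hj₂ hj₂ℓ ho₂
  have hp₁D₂ : ¬ p₁ ∣ (p₂ - 1) / δ₂' := fun h => hndvd (h.trans (Nat.div_dvd_of_dvd hδ₂dvd))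
  have hp₂D₁ : ¬ p₂ ∣ (p₁ - 1) / δ₁' := fun h => absurd
    (Nat.le_of_dvd (Nat.sub_pos_of_lt hp₁.one_lt) (h.trans (Nat.div_dvd_of_dvd hδ₁dvd))) (by omega)
  rw [ZMod.orderOf_natCast_mul_of_coprime (Nat.Coprime.pow _ _ hp₁₂), hord₁, hord₂]
  exact Nat.lcm_mul_mul_eq_mul_mul_lcm
    (((hp₁₂.pow_right _).mul_right (hp₁.coprime_iff_not_dvd.mpr hp₁D₂)).pow_left _)
    ((hp₂.coprime_iff_not_dvd.mpr hp₂D₁).pow_left _)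

/-- under the two-prime hypotheses, for i01 < j₁ ≤ m and
i02 < j₂ ≤ ℓ, the multiplicative order of q mod p₁^{j₁} p₂^{j₂} equals
p₁^{j₁-i01} · p₂^{j₂-i02} · lcm((p₁-1)/δ₁', (p₂-1)/δ₂'). -/
theorem two_prime_order_formula
    (p₁ p₂ q m ℓ δ₁ δ₂ i01 i02 δ₁' δ₂' j₁ j₂ : ℕ)
    (hp₁ : p₁.Prime) (hp₂ : p₂.Prime) (hp₁odd : Odd p₁) (hp₂odd : Odd p₂)
    (hlt : p₁ < p₂) (hndvd : ¬ p₁ ∣ (p₂ - 1))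
    (hcop : Nat.Coprime q (p₁ * p₂))
    (hm : 1 ≤ m) (hℓ : 1 ≤ ℓ)
    (ho₁ : orderOf ((q : ZMod (p₁ ^ m))) * δ₁ = Nat.totient (p₁ ^ m))
    (ho₂ : orderOf ((q : ZMod (p₂ ^ ℓ))) * δ₂ = Nat.totient (p₂ ^ ℓ))
    (hi01 : 1 ≤ i01) (hi02 : 1 ≤ i02)
    (hδ₁ : δ₁ = p₁ ^ (i01 - 1) * δ₁') (hδ₂ : δ₂ = p₂ ^ (i02 - 1) * δ₂')
    (hδ₁' : Nat.Coprime δ₁' p₁) (hδ₂' : Nat.Coprime δ₂' p₂)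
    (hj₁ : i01 < j₁) (hj₁m : j₁ ≤ m) (hj₂ : i02 < j₂) (hj₂ℓ : j₂ ≤ ℓ) :
    orderOf ((q : ZMod (p₁ ^ j₁ * p₂ ^ j₂))) =
      p₁ ^ (j₁ - i01) * p₂ ^ (j₂ - i02) *
        Nat.lcm ((p₁ - 1) / δ₁') ((p₂ - 1) / δ₂') :=
  two_prime_order_formula_general p₁ p₂ q m ℓ δ₁ δ₂ i01 i02 δ₁' δ₂' j₁ j₂ hp₁ hp₂ hp₁odd hp₂odd hlt
    hndvd hcop ho₁ ho₂ hi01 hi02 hδ₁ hδ₂ hδ₁' hδ₂' hj₁ hj₁m hj₂ hj₂ℓ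
end

section
/- Let F be a field of characteristic 2, G a group, and g ∈ G of order p^m for an odd prime p. Let k be coprime to 2p^m and let k_1 > 0 satisfy k·k_1 ≡ 1 mod p^m. Then in FG, u_k(g) := 1 + g + ... + g^{k-1} is a unit, and u_k(g)·u_{k_1}(g^k) equals 1 if k_1 is odd and equals 1 + g̃ if k_1 is even, where g̃ = Σ_{i=0}^{p^m-1} g^i. -/
open MonoidAlgebra Finset

private lemma sum_range_add'' {M : Type*} [AddCommMonoid M] (f : ℕ → M) (m n : ℕ) :
    ∑ i ∈ range (m + n), f i = (∑ i ∈ range m, f i) + ∑ i ∈ range n, f (m + i) := by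
  induction n with
  | zero => simp
  | succ n ih => rw [Nat.add_succ, sum_range_succ, sum_range_succ, ih, add_assoc]

private lemma geom_mul_geom (F : Type*) [Field F] (G : Type*) [Group G] (g : G) (a b : ℕ) :
    (∑ i ∈ Finset.range a, MonoidAlgebra.of F G (g ^ i)) *
      (∑ j ∈ Finset.range b, MonoidAlgebra.of F G ((g ^ a) ^ j)) =
    ∑ n ∈ Finset.range (a * b), MonoidAlgebra.of F G (g ^ n) := by
  induction b with
  | zero => simp
  | succ b ih =>
    rw [Finset.sum_range_succ, mul_add, ih, Nat.mul_succ, sum_range_add'', Finset.sum_mul]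
    congr 1
    refine Finset.sum_congr rfl fun i _ => ?_
    rw [← map_mul, ← pow_mul, ← pow_add, Nat.add_comm i (a * b)]

private lemma main_eq (F : Type*) [Field F] (hchar : ringChar F = 2)
    (G : Type*) [Group G] (g : G) (p m : ℕ) (hpodd : Odd p)
    (hord : orderOf g = p ^ m)
    (k k₁ : ℕ) (hkodd : Odd k) (hk₁ : 0 < k₁)
    (hkk₁ : k * k₁ ≡ 1 [MOD p ^ m]) :
    (∑ i ∈ Finset.range k, MonoidAlgebra.of F G (g ^ i)) *
      (∑ j ∈ Finset.range k₁, MonoidAlgebra.of F G ((g ^ k) ^ j)) =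
      (if Odd k₁ then 1
        else 1 + ∑ i ∈ Finset.range (p ^ m), MonoidAlgebra.of F G (g ^ i)) := by
  haveI : CharP F 2 := hchar ▸ ringChar.charP F
  haveI : CharP (MonoidAlgebra F G) 2 :=
    charP_of_injective_algebraMap' F (A := MonoidAlgebra F G) 2
  have hpm : Odd (p ^ m) := hpodd.pow
  have hle : 1 ≤ k * k₁ := Nat.one_le_iff_ne_zero.mpr
    (Nat.mul_ne_zero hkodd.pos.ne' hk₁.ne')
  obtain ⟨t, ht⟩ := (Nat.modEq_iff_dvd' hle).mp hkk₁.symm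
  have heq : k * k₁ = p ^ m * t + 1 := by omega
  have hone : (g : G) ^ (p ^ m * t) = 1 := by
    rw [pow_mul, ← hord, pow_orderOf_eq_one, one_pow]
  have hper : ∑ n ∈ Finset.range (p ^ m * t), MonoidAlgebra.of F G (g ^ n) =
      (∑ i ∈ Finset.range (p ^ m), MonoidAlgebra.of F G (g ^ i)) * (t : MonoidAlgebra F G) := by
    rw [← geom_mul_geom]
    congr 1
    rw [← hord]
    simp [pow_orderOf_eq_one, ← MonoidAlgebra.one_def]
  have hpar : Odd k₁ ↔ Even t := by
    have h1 : Odd (k * k₁) ↔ Odd k₁ := by simp [Nat.odd_mul, hkodd]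
    have h2 : Odd (p ^ m * t + 1) ↔ Even t := by
      simp [Nat.odd_add_one, Nat.even_mul, Nat.not_even_iff_odd, hpm]
    rw [← h1, heq, h2]
  rw [geom_mul_geom, heq, Finset.sum_range_succ, hone, map_one, hper]
  rcases Nat.even_or_odd t with hev | hod
  · obtain ⟨s, rfl⟩ := hev
    rw [if_pos (hpar.mpr ⟨s, rfl⟩)]
    have h2 : ((2 : ℕ) : MonoidAlgebra F G) = 0 := CharP.cast_eq_zero (MonoidAlgebra F G) 2
    have : ((s + s : ℕ) : MonoidAlgebra F G) = 0 := by
      rw [← two_mul, Nat.cast_mul, h2, zero_mul]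
    rw [this, mul_zero, zero_add]
  · rw [if_neg (by rw [hpar]; exact (Nat.not_even_iff_odd).mpr hod)]
    obtain ⟨s, rfl⟩ := hod
    have h2 : ((2 : ℕ) : MonoidAlgebra F G) = 0 := CharP.cast_eq_zero (MonoidAlgebra F G) 2
    have : ((2 * s + 1 : ℕ) : MonoidAlgebra F G) = 1 := by
      rw [Nat.cast_add, Nat.cast_mul, h2, zero_mul, zero_add, Nat.cast_one]
    rw [this, mul_one, add_comm]



open MonoidAlgebra

/-- alternating units in characteristic 2.  If g ∈ G has order
p^m (p an odd prime), k is coprime to 2p^m, k₁ > 0 and k·k₁ ≡ 1 mod p^m, then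
u_k(g) = 1 + g + ⋯ + g^{k-1} is a unit in FG and
u_k(g)·u_{k₁}(g^k) = 1 if k₁ is odd, and = 1 + g̃ if k₁ is even, where
g̃ = Σ_{i<p^m} g^i. -/
theorem alternating_unit_char_two
    (F : Type*) [Field F] (hchar : ringChar F = 2)
    (G : Type*) [Group G] (g : G) (p m : ℕ) (hp : p.Prime) (hpodd : Odd p)
    (hord : orderOf g = p ^ m)
    (k k₁ : ℕ) (hk : Nat.Coprime k (2 * p ^ m)) (hk₁ : 0 < k₁)
    (hkk₁ : k * k₁ ≡ 1 [MOD p ^ m]) :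
    IsUnit (∑ i ∈ Finset.range k, MonoidAlgebra.of F G (g ^ i)) ∧
    (∑ i ∈ Finset.range k, MonoidAlgebra.of F G (g ^ i)) *
      (∑ j ∈ Finset.range k₁, MonoidAlgebra.of F G ((g ^ k) ^ j)) =
      (if Odd k₁ then 1
        else 1 + ∑ i ∈ Finset.range (p ^ m), MonoidAlgebra.of F G (g ^ i)) := by

  have hkodd : Odd k := (Nat.coprime_two_right).mp
    (Nat.Coprime.coprime_dvd_right ⟨p ^ m, rfl⟩ hk)
  refine ⟨?_, main_eq F hchar G g p m hpodd hord k k₁ hkodd hk₁ hkk₁⟩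
  have hlt : 1 < 2 * p ^ m := by
    have := Nat.one_le_two_pow (n := 0)
    have hpm : 0 < p ^ m := pow_pos hp.pos m
    omega
  obtain ⟨b, -, hb⟩ := Nat.exists_mul_mod_eq_one_of_coprime hk hlt
  have hmod : k * b ≡ 1 [MOD 2 * p ^ m] := by
    unfold Nat.ModEq
    rw [hb, Nat.mod_eq_of_lt hlt]
  have hbodd : Odd b := by
    have h2 : k * b ≡ 1 [MOD 2] := hmod.of_mul_right (p ^ m)
    have : (k * b) % 2 = 1 := by
      have := h2
      unfold Nat.ModEq at this
      simpa using this
    exact (Nat.odd_mul.mp (Nat.odd_iff.mpr this)).2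
  have hbpos : 0 < b := hbodd.pos
  have hbmod : k * b ≡ 1 [MOD p ^ m] := hmod.of_mul_left 2
  have h1 := main_eq F hchar G g p m hpodd hord k b hkodd hbpos hbmod
  rw [if_pos hbodd] at h1
  have hcomm : Commute (∑ i ∈ Finset.range k, MonoidAlgebra.of F G (g ^ i))
      (∑ j ∈ Finset.range b, MonoidAlgebra.of F G ((g ^ k) ^ j)) := by
    refine Commute.sum_left _ _ _ fun i _ => Commute.sum_right _ _ _ fun j _ => ?_
    rw [← pow_mul]
    exact ((Commute.refl g).pow_pow i (k * j)).map (MonoidAlgebra.of F G)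
  exact isUnit_iff_exists.mpr ⟨_, h1, hcomm.symm ▸ h1 ▸ (hcomm.eq ▸ rfl)⟩
end

section
/- Let p be an odd prime, n ≥ 2, and F_q a field with gcd(q, p) = 1. Consider the group G = ⟨a, b | a^{p^n} = 1, b^p = 1, b^{-1}ab = a^{p^{n-1}+1}⟩ of order p^{n+1}. Then the pair (⟨a⟩, ⟨1⟩) is a strong Shoda pair of G: ⟨a⟩ is a normal subgroup of G, ⟨a⟩ is cyclic, and ⟨a⟩/⟨1⟩ is a maximal abelian subgroup of N_G(⟨1⟩)/⟨1⟩ = G. -/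
/-! Conjugation by `b` raises `a` to the power `c = 1 + p ^ (n - 1)`, so `⟨a⟩` is normal and `b ^ m`
commutes with `a` iff `c ^ m ≡ 1 [MOD p ^ n]`. As `(p ^ (n - 1)) ^ 2 ≡ 0 [MOD p ^ n]`, we have
`c ^ m ≡ 1 + m * p ^ (n - 1)`, so `c` has order `p` modulo `p ^ n`, and `b ^ m` commutes with `a`
only if `b ^ m = 1`. Since every element of `G` is some `b ^ m * a ^ k`, the centralizer of `a` is
`⟨a⟩`. -/

theorem one_add_pow_of_sq_eq_zero {R : Type*} [CommRing R] {u : R} (hu : u ^ 2 = 0) (m : ℕ) :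
    (1 + u) ^ m = 1 + m * u := by
  induction m with
  | zero => simp
  | succ m ih =>
    rw [pow_succ, ih]
    push_cast
    linear_combination (m : R) * hu

theorem ZMod.orderOf_one_add_prime_pow_pred {p n : ℕ} (hp : p.Prime) (hn : 2 ≤ n) :
    orderOf (1 + (p : ZMod (p ^ n)) ^ (n - 1)) = p := by
  have := Fact.mk hp
  have hsq : ((p : ZMod (p ^ n)) ^ (n - 1)) ^ 2 = 0 := by
    rw [← pow_mul, ← Nat.cast_pow, ZMod.natCast_eq_zero_iff]
    exact pow_dvd_pow p (by omega)
  apply orderOf_eq_prime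
  · rw [one_add_pow_of_sq_eq_zero hsq, ← pow_succ', Nat.sub_add_cancel (by omega : 1 ≤ n),
      ← Nat.cast_pow, ZMod.natCast_self, add_zero]
  · rw [ne_eq, add_eq_left, ← Nat.cast_pow, ZMod.natCast_eq_zero_iff,
      Nat.pow_dvd_pow_iff_le_right hp.one_lt]
    omega

section

variable {G : Type*} [Group G] {a b : G}

theorem conj_pow_eq_pow_pow {c : ℕ} (h : b⁻¹ * a * b = a ^ c) (m : ℕ) :
    (b ^ m)⁻¹ * a * b ^ m = a ^ c ^ m := by
  induction m with
  | zero => simp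
  | succ m ih =>
    calc (b ^ (m + 1))⁻¹ * a * b ^ (m + 1) = b⁻¹ * ((b ^ m)⁻¹ * a * b ^ m) * b := by group
      _ = b⁻¹ * a ^ c ^ m * b := by rw [ih]
      _ = (b⁻¹ * a * b) ^ c ^ m := by
        simpa only [inv_inv] using (conj_pow (a := b⁻¹) (b := a) (i := c ^ m)).symm
      _ = a ^ c ^ (m + 1) := by rw [h, ← pow_mul, pow_succ']

theorem commute_pow_iff_orderOf_dvd {c : ℕ} (h : b⁻¹ * a * b = a ^ c) (m : ℕ) :
    Commute (b ^ m) a ↔ orderOf (c : ZMod (orderOf a)) ∣ m := by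
  rw [orderOf_dvd_iff_pow_eq_one, ← Nat.cast_pow, ← Nat.cast_one, ZMod.natCast_eq_natCast_iff,
    ← pow_eq_pow_iff_modEq, pow_one, ← conj_pow_eq_pow_pow h, Commute, SemiconjBy,
    mul_assoc, inv_mul_eq_iff_eq_mul, eq_comm]

end

namespace Subgroup

variable {G : Type*} [Group G] {a b : G}

theorem zpowers_normal_of_conj_mem [Finite G] (hgen : closure {a, b} = ⊤)
    (h : b⁻¹ * a * b ∈ zpowers a) : (zpowers a).Normal := by
  have hb : b⁻¹ ∈ normalizer (zpowers a : Set G) := by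
    refine mem_normalizer_fintype ?_
    rintro _ ⟨k, rfl⟩
    rw [← conj_zpow]
    simpa only [inv_inv, SetLike.mem_coe] using zpow_mem h k
  rw [← normalizer_eq_top_iff, ← top_le_iff, ← hgen, closure_le]
  rintro x (rfl | rfl)
  · exact le_normalizer (mem_zpowers x)
  · simpa only [inv_inv, SetLike.mem_coe] using inv_mem hb

theorem exists_mem_zpowers_mul_mem_zpowers [(zpowers a).Normal] (hgen : closure {a, b} = ⊤)
    (g : G) : ∃ y ∈ zpowers b, ∃ z ∈ zpowers a, y * z = g := by
  rw [← mem_sup_of_normal_right, zpowers_eq_closure, zpowers_eq_closure, ← closure_union,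
    Set.singleton_union, Set.pair_comm, hgen]
  exact mem_top g

theorem centralizer_eq_zpowers_of_conj_eq_pow [Finite G] {c : ℕ} (hgen : closure {a, b} = ⊤)
    (h : b⁻¹ * a * b = a ^ c) (hb : orderOf b ∣ orderOf (c : ZMod (orderOf a))) :
    centralizer {a} = zpowers a := by
  have : (zpowers a).Normal := zpowers_normal_of_conj_mem hgen (h ▸ pow_mem (mem_zpowers a) c)
  refine le_antisymm (fun g hg => ?_) (zpowers_le.mpr (mem_centralizer_singleton_iff.mpr rfl))
  obtain ⟨y, hy, z, hz, rfl⟩ := exists_mem_zpowers_mul_mem_zpowers hgen g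
  obtain ⟨m, rfl⟩ := Submonoid.mem_powers_iff _ _ |>.mp (mem_powers_iff_mem_zpowers.mpr hy)
  obtain ⟨k, rfl⟩ := mem_zpowers_iff.mp hz
  have hya : Commute (b ^ m) a := by
    have hga : Commute (b ^ m * a ^ k) a := mem_centralizer_singleton_iff.mp hg
    simpa using hga.mul_left ((Commute.refl a).zpow_left k).inv_left
  have hm : b ^ m = 1 :=
    orderOf_dvd_iff_pow_eq_one.mp (hb.trans ((commute_pow_iff_orderOf_dvd h m).mp hya))
  rw [hm, one_mul]
  exact hz

end Subgroup

theorem strong_shoda_pair_maximal_cyclic_general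
    (p n : ℕ) (hp : p.Prime) (hn : 2 ≤ n)
    (G : Type*) [Group G] [Finite G] (a b : G)
    (hgen : Subgroup.closure {a, b} = ⊤)
    (ha : orderOf a = p ^ n)
    (hb : b ^ p = 1)
    (hrel : b⁻¹ * a * b = a ^ (p ^ (n - 1) + 1)) :
    (Subgroup.zpowers a).Normal ∧
    IsCyclic (Subgroup.zpowers a) ∧
    Subgroup.centralizer {a} = Subgroup.zpowers a := by
  have horder : orderOf ((p ^ (n - 1) + 1 : ℕ) : ZMod (orderOf a)) = p := by
    rw [ha, Nat.cast_add, Nat.cast_pow, Nat.cast_one, add_comm]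
    exact ZMod.orderOf_one_add_prime_pow_pred hp hn
  refine ⟨Subgroup.zpowers_normal_of_conj_mem hgen (hrel ▸ pow_mem (Subgroup.mem_zpowers a) _),
    inferInstance, Subgroup.centralizer_eq_zpowers_of_conj_eq_pow hgen hrel ?_⟩
  rw [horder]
  exact orderOf_dvd_of_pow_eq_one hb

/-- Let p be an odd prime, n ≥ 2, and let G be the metacyclic
group of order p^{n+1} with presentation
⟨a, b ∣ a^{p^n} = 1, b^p = 1, b⁻¹ab = a^{p^{n-1}+1}⟩.  Then (⟨a⟩, ⟨1⟩) is a
strong Shoda pair of G: ⟨a⟩ is a normal cyclic subgroup of G which is a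
maximal abelian subgroup of G (its centralizer is itself). -/
theorem strong_shoda_pair_maximal_cyclic
    (p n q : ℕ) (hp : p.Prime) (hpodd : Odd p) (hn : 2 ≤ n)
    (hq : Nat.Coprime q p)
    (G : Type*) [Group G] [Finite G] (a b : G)
    (hcard : Nat.card G = p ^ (n + 1))
    (hgen : Subgroup.closure {a, b} = ⊤)
    (ha : orderOf a = p ^ n)
    (hb : b ^ p = 1)
    (hrel : b⁻¹ * a * b = a ^ (p ^ (n - 1) + 1)) :
    (Subgroup.zpowers a).Normal ∧
    IsCyclic (Subgroup.zpowers a) ∧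
    Subgroup.centralizer {a} = Subgroup.zpowers a :=
  strong_shoda_pair_maximal_cyclic_general p n hp hn G a b hgen ha hb hrel
end

section
/- Let G_1 and G_2 be finite groups with gcd(|G_1|, |G_2|) = 1. If (H_1, K_1) is a strong Shoda pair of G_1 and (H_2, K_2) is a strong Shoda pair of G_2, then (H_1 × H_2, K_1 × K_2) is a strong Shoda pair of G_1 × G_2. -/
/-!
The normalizer of `K₁ × K₂` in `G₁ × G₂` is `N_{G₁}(K₁) × N_{G₂}(K₂)`, so `N(K₁ × K₂)/(K₁ × K₂)` is
isomorphic to `N(K₁)/K₁ × N(K₂)/K₂`, and the isomorphism carries `(H₁ × H₂)/(K₁ × K₂)` onto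
`H₁/K₁ × H₂/K₂`. A product of maximal abelian subgroups is maximal abelian, since an abelian
overgroup projects to abelian overgroups of the factors. Finally `|Hᵢ/Kᵢ|` divides `|Gᵢ|`, so the
two cyclic factors have coprime orders and their product is cyclic.
-/

/-- A strong Shoda pair (H, K) of a group G: K ≤ H, H is a normal subgroup of
N_G(K), and the image H/K of H in N_G(K)/K is cyclic and a maximal abelian
subgroup of N_G(K)/K. -/
def IsStrongShodaPair {G : Type*} [Group G] (H K : Subgroup G) : Prop :=
  K ≤ H ∧ H ≤ (Subgroup.normalizer (K : Set G)) ∧ (H.subgroupOf (Subgroup.normalizer (K : Set G))).Normal ∧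
  IsCyclic ((H.subgroupOf (Subgroup.normalizer (K : Set G))).map
      (QuotientGroup.mk' (K.subgroupOf (Subgroup.normalizer (K : Set G))))) ∧
  (∀ x ∈ (H.subgroupOf (Subgroup.normalizer (K : Set G))).map
      (QuotientGroup.mk' (K.subgroupOf (Subgroup.normalizer (K : Set G)))),
    ∀ y ∈ (H.subgroupOf (Subgroup.normalizer (K : Set G))).map
      (QuotientGroup.mk' (K.subgroupOf (Subgroup.normalizer (K : Set G)))), x * y = y * x) ∧
  ∀ A : Subgroup ((Subgroup.normalizer (K : Set G)) ⧸ K.subgroupOf (Subgroup.normalizer (K : Set G))),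
    (H.subgroupOf (Subgroup.normalizer (K : Set G))).map
        (QuotientGroup.mk' (K.subgroupOf (Subgroup.normalizer (K : Set G)))) ≤ A →
    (∀ x ∈ A, ∀ y ∈ A, x * y = y * x) →
    A = (H.subgroupOf (Subgroup.normalizer (K : Set G))).map
        (QuotientGroup.mk' (K.subgroupOf (Subgroup.normalizer (K : Set G))))

namespace Subgroup

variable {Q Q' Q₁ Q₂ Q₁' Q₂' : Type*} [Group Q] [Group Q'] [Group Q₁] [Group Q₂]
  [Group Q₁'] [Group Q₂']

def IsAbelian (A : Subgroup Q) : Prop := ∀ x ∈ A, ∀ y ∈ A, x * y = y * x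

theorem IsAbelian.map {A : Subgroup Q} (hA : A.IsAbelian) (f : Q →* Q') :
    (A.map f).IsAbelian := by
  rintro _ ⟨x, hx, rfl⟩ _ ⟨y, hy, rfl⟩
  rw [← map_mul, ← map_mul, hA x hx y hy]

theorem IsAbelian.prod {A₁ : Subgroup Q₁} {A₂ : Subgroup Q₂} (h₁ : A₁.IsAbelian)
    (h₂ : A₂.IsAbelian) : (A₁.prod A₂).IsAbelian :=
  fun _ hx _ hy => Prod.ext (h₁ _ hx.1 _ hy.1) (h₂ _ hx.2 _ hy.2)

theorem maximal_isAbelian_prod {M₁ : Subgroup Q₁} {M₂ : Subgroup Q₂}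
    (h₁ : Maximal IsAbelian M₁) (h₂ : Maximal IsAbelian M₂) :
    Maximal IsAbelian (M₁.prod M₂) := by
  refine ⟨h₁.prop.prod h₂.prop, fun B hB hMB => le_prod_iff.mpr ⟨?_, ?_⟩⟩
  · exact h₁.2 (hB.map _) fun m hm => ⟨(m, 1), hMB ⟨hm, one_mem _⟩, rfl⟩
  · exact h₂.2 (hB.map _) fun m hm => ⟨(1, m), hMB ⟨one_mem _, hm⟩, rfl⟩

theorem maximal_isAbelian_map_equiv {M : Subgroup Q} (hM : Maximal IsAbelian M) (e : Q ≃* Q') :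
    Maximal IsAbelian (M.map e.toMonoidHom) := by
  refine ⟨hM.prop.map _, fun B hB hMB => ?_⟩
  have hBM : B.map e.symm.toMonoidHom ≤ M := hM.2 (hB.map _) <| by
    rw [← comap_equiv_eq_map_symm']
    exact map_le_iff_le_comap.mp hMB
  rw [map_equiv_eq_comap_symm']
  exact map_le_iff_le_comap.mp hBM

theorem maximal_isAbelian_map_equiv_iff {M : Subgroup Q} (e : Q ≃* Q') :
    Maximal IsAbelian (M.map e.toMonoidHom) ↔ Maximal IsAbelian M := by
  refine ⟨fun h => ?_, fun h => maximal_isAbelian_map_equiv h e⟩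
  simpa [map_map] using maximal_isAbelian_map_equiv h e.symm

theorem map_prodMap_prod (f : Q₁ →* Q₁') (g : Q₂ →* Q₂') (A₁ : Subgroup Q₁) (A₂ : Subgroup Q₂) :
    (A₁.prod A₂).map (f.prodMap g) = (A₁.map f).prod (A₂.map g) := by
  ext ⟨x, y⟩
  simp only [mem_map, mem_prod, Prod.exists, MonoidHom.coe_prodMap, Prod.map_apply, Prod.mk.injEq]
  constructor
  · rintro ⟨a, b, ⟨ha, hb⟩, rfl, rfl⟩
    exact ⟨⟨a, ha, rfl⟩, b, hb, rfl⟩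
  · rintro ⟨⟨a, ha, rfl⟩, b, hb, rfl⟩
    exact ⟨a, b, ⟨ha, hb⟩, rfl, rfl⟩

theorem normalizer_prod (K₁ : Subgroup Q₁) (K₂ : Subgroup Q₂) :
    normalizer ((K₁.prod K₂ : Subgroup (Q₁ × Q₂)) : Set (Q₁ × Q₂)) =
      (normalizer (K₁ : Set Q₁)).prod (normalizer (K₂ : Set Q₂)) := by
  ext ⟨g₁, g₂⟩
  simp only [mem_normalizer_iff, mem_prod]
  refine ⟨fun h => ⟨fun k => ?_, fun k => ?_⟩, fun ⟨h₁, h₂⟩ k => ?_⟩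
  · simpa [K₂.one_mem] using h (k, 1)
  · simpa [K₁.one_mem] using h (1, k)
  · simp [← h₁ k.1, ← h₂ k.2]

end Subgroup

open Subgroup

section

variable {G G₁ G₂ : Type*} [Group G] [Group G₁] [Group G₂]

/-- The subgroup `H/K` of `N_G(K)/K`. -/
def normalizerQuotientImage (H K : Subgroup G) :
    Subgroup (normalizer (K : Set G) ⧸ K.subgroupOf (normalizer (K : Set G))) :=
  (H.subgroupOf (normalizer (K : Set G))).map
    (QuotientGroup.mk' (K.subgroupOf (normalizer (K : Set G))))

theorem isStrongShodaPair_iff (H K : Subgroup G) :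
    IsStrongShodaPair H K ↔ K ≤ H ∧ H ≤ normalizer (K : Set G) ∧
      (H.subgroupOf (normalizer (K : Set G))).Normal ∧ IsCyclic (normalizerQuotientImage H K) ∧
      Maximal IsAbelian (normalizerQuotientImage H K) := by
  refine and_congr_right' <| and_congr_right' <| and_congr_right' <| and_congr_right' ?_
  rw [maximal_iff]
  exact and_congr_right' ⟨fun h A hA hle => (h A hle hA).symm, fun h A hle hA => (h hA hle).symm⟩

theorem card_normalizerQuotientImage_dvd (H K : Subgroup G) :
    Nat.card (normalizerQuotientImage H K) ∣ Nat.card G :=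
  (card_subgroup_dvd_card _).trans ((card_quotient_dvd_card _).trans (card_subgroup_dvd_card _))

noncomputable def normalizerProdEquiv (K₁ : Subgroup G₁) (K₂ : Subgroup G₂) :
    normalizer ((K₁.prod K₂ : Subgroup (G₁ × G₂)) : Set (G₁ × G₂)) ≃*
      normalizer (K₁ : Set G₁) × normalizer (K₂ : Set G₂) :=
  (MulEquiv.subgroupCongr (normalizer_prod K₁ K₂)).trans (prodEquiv _ _)

theorem map_subgroupOf_normalizerProdEquiv {K₁ : Subgroup G₁} {K₂ : Subgroup G₂}
    (A₁ : Subgroup G₁) (A₂ : Subgroup G₂) :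
    ((A₁.prod A₂).subgroupOf _).map (normalizerProdEquiv K₁ K₂).toMonoidHom =
      (A₁.subgroupOf _).prod (A₂.subgroupOf _) := by
  rw [map_equiv_eq_comap_symm']
  rfl

noncomputable def normalizerQuotientProdEquiv (K₁ : Subgroup G₁) (K₂ : Subgroup G₂) :
    normalizer ((K₁.prod K₂ : Subgroup (G₁ × G₂)) : Set (G₁ × G₂)) ⧸
        (K₁.prod K₂).subgroupOf (normalizer ((K₁.prod K₂ : Subgroup (G₁ × G₂)) : Set (G₁ × G₂))) ≃*
      (normalizer (K₁ : Set G₁) ⧸ K₁.subgroupOf (normalizer (K₁ : Set G₁))) ×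
        (normalizer (K₂ : Set G₂) ⧸ K₂.subgroupOf (normalizer (K₂ : Set G₂))) :=
  (QuotientGroup.congr _ _ (normalizerProdEquiv K₁ K₂)
    (map_subgroupOf_normalizerProdEquiv K₁ K₂)).trans (QuotientGroup.prodMulEquiv _ _)

theorem map_normalizerQuotientImage_prod (H₁ K₁ : Subgroup G₁) (H₂ K₂ : Subgroup G₂) :
    (normalizerQuotientImage (H₁.prod H₂) (K₁.prod K₂)).map
        (normalizerQuotientProdEquiv K₁ K₂).toMonoidHom =
      (normalizerQuotientImage H₁ K₁).prod (normalizerQuotientImage H₂ K₂) := by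
  have hcomp : (normalizerQuotientProdEquiv K₁ K₂).toMonoidHom.comp (QuotientGroup.mk' _) =
      ((QuotientGroup.mk' _).prodMap (QuotientGroup.mk' _)).comp
        (normalizerProdEquiv K₁ K₂).toMonoidHom := by
    ext <;> rfl
  rw [normalizerQuotientImage, map_map, hcomp, ← map_map, map_subgroupOf_normalizerProdEquiv,
    map_prodMap_prod]
  rfl

end

theorem strong_shoda_pair_prod_general
    (G₁ G₂ : Type*) [Group G₁] [Group G₂]
    (hcop : Nat.Coprime (Nat.card G₁) (Nat.card G₂))
    (H₁ K₁ : Subgroup G₁) (H₂ K₂ : Subgroup G₂)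
    (h₁ : IsStrongShodaPair H₁ K₁) (h₂ : IsStrongShodaPair H₂ K₂) :
    IsStrongShodaPair (H₁.prod H₂) (K₁.prod K₂) := by
  rw [isStrongShodaPair_iff] at h₁ h₂ ⊢
  obtain ⟨hKH₁, hHN₁, hnormal₁, hcyclic₁, hmax₁⟩ := h₁
  obtain ⟨hKH₂, hHN₂, hnormal₂, hcyclic₂, hmax₂⟩ := h₂
  set e := normalizerQuotientProdEquiv K₁ K₂
  have himage := map_normalizerQuotientImage_prod H₁ K₁ H₂ K₂
  refine ⟨prod_mono hKH₁ hKH₂, normalizer_prod K₁ K₂ ▸ prod_mono hHN₁ hHN₂, ?_, ?_, ?_⟩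
  · rw [← MulEquiv.normal_map_iff (f := normalizerProdEquiv K₁ K₂),
      ← MulEquiv.toMonoidHom_eq_coe, map_subgroupOf_normalizerProdEquiv]
    infer_instance
  · have hcop' := hcop.of_dvd (card_normalizerQuotientImage_dvd H₁ K₁)
      (card_normalizerQuotientImage_dvd H₂ K₂)
    rw [(equivMapOfInjective _ e.toMonoidHom e.injective).isCyclic, himage,
      (prodEquiv _ _).isCyclic, Group.isCyclic_prod_iff]
    exact ⟨hcyclic₁, hcyclic₂, hcop'⟩
  · rw [← maximal_isAbelian_map_equiv_iff e, himage]
    exact maximal_isAbelian_prod hmax₁ hmax₂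

/-- if gcd(|G₁|,|G₂|)=1 and (H₁,K₁), (H₂,K₂) are strong Shoda
pairs of G₁ and G₂ respectively, then (H₁×H₂, K₁×K₂) is a strong Shoda pair
of G₁ × G₂. -/
theorem strong_shoda_pair_prod
    (G₁ G₂ : Type*) [Group G₁] [Group G₂] [Finite G₁] [Finite G₂]
    (hcop : Nat.Coprime (Nat.card G₁) (Nat.card G₂))
    (H₁ K₁ : Subgroup G₁) (H₂ K₂ : Subgroup G₂)
    (h₁ : IsStrongShodaPair H₁ K₁) (h₂ : IsStrongShodaPair H₂ K₂) :
    IsStrongShodaPair (H₁.prod H₂) (K₁.prod K₂) :=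
  strong_shoda_pair_prod_general G₁ G₂ hcop H₁ K₁ H₂ K₂ h₁ h₂
end
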